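/- arXiv:2506.11592 — 7 statements merged into one kernel-verified Lean document; each statement's English description precedes it below -/
import Mathlib

section
/- Let X and Y be locally compact Hausdorff topological spaces, let A be a closed subspace of Y, and let f : A → X be a proper continuous map. Then the adjunction space X ∪_f Y is a locally compact Hausdorff space. -/
/-!
The quotient map `X ⊔ Y → X ∪_f Y` is proper. It is closed: the saturation of a closed set
`C = C_X ⊔ C_Y` meets `X` in `C_X ∪ f(C_Y ∩ A)`, which is closed because `f` is a closed map,
and meets `Y` in `C_Y ∪ f⁻¹(C_X ∪ f(C_Y ∩ A))`, closed because `A` is. Its fibres are points or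
`{x} ∪ f⁻¹(x)`, compact because `f` is proper. A proper surjection carries local compactness and
the Hausdorff property of `X ⊔ Y` over to its target, since the neighbourhoods of a point of the
target pull back exactly to the neighbourhoods of its compact fibre.
-/

open Set Topology

/-- A continuous map which is proper: preimages of compact sets are compact. -/
def ProperCont {X Y : Type*} [TopologicalSpace X] [TopologicalSpace Y] (f : X → Y) : Prop :=
  Continuous f ∧ ∀ K : Set Y, IsCompact K → IsCompact (f ⁻¹' K)

/-- The relation generating the adjunction-space identification: `a ∈ A ⊆ Y` is glued
to `f a ∈ X`. -/
inductive AdjRel {X Y : Type*} {A : Set Y} (f : A → X) : X ⊕ Y → X ⊕ Y → Prop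
  | glue (a : A) : AdjRel f (Sum.inl (f a)) (Sum.inr a.1)

/-- The adjunction space `X ∪_f Y`: the quotient of the disjoint union `X ⊔ Y`
identifying each `a ∈ A` with `f a ∈ X`. -/
def AdjSpace {X Y : Type*} {A : Set Y} (f : A → X) : Type _ := Quot (AdjRel f)

instance {X Y : Type*} [TopologicalSpace X] [TopologicalSpace Y] {A : Set Y} (f : A → X) :
    TopologicalSpace (AdjSpace f) :=
  inferInstanceAs (TopologicalSpace (Quot (AdjRel f)))

section ProperQuotient

variable {Z W : Type*} [TopologicalSpace Z] [TopologicalSpace W] {q : Z → W}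

theorem Topology.IsOpenEmbedding.exists_isCompact_mem_nhds [LocallyCompactSpace Z]
    (hq : IsOpenEmbedding q) (z : Z) {n : Set W} (hn : n ∈ 𝓝 (q z)) :
    ∃ s ∈ 𝓝 (q z), s ⊆ n ∧ IsCompact s := by
  obtain ⟨K, hK, hKn, hKc⟩ := local_compact_nhds (hq.continuous.continuousAt hn)
  exact ⟨q '' K, hq.image_mem_nhds.2 hK, image_subset_iff.2 hKn, hKc.image hq.continuous⟩

instance Sum.locallyCompactSpace [LocallyCompactSpace Z] [LocallyCompactSpace W] :
    LocallyCompactSpace (Z ⊕ W) where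
  local_compact_nhds := by
    rintro (z | w) n hn
    exacts [IsOpenEmbedding.inl.exists_isCompact_mem_nhds z hn,
      IsOpenEmbedding.inr.exists_isCompact_mem_nhds w hn]

theorem IsProperMap.locallyCompactSpace_of_surjective [LocallyCompactSpace Z]
    (hq : IsProperMap q) (hsurj : Function.Surjective q) : LocallyCompactSpace W where
  local_compact_nhds := by
    refine hsurj.forall.2 fun z n hn => ?_
    have hfiber : q ⁻¹' n ∈ 𝓝ˢ (q ⁻¹' {q z}) := by
      rw [← hq.isClosedMap.comap_nhds_eq hq.continuous]
      exact Filter.preimage_mem_comap hn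
    obtain ⟨K, ⟨hK, hKc⟩, hKn⟩ :=
      (hq.isCompact_preimage isCompact_singleton).nhdsSet_basis_isCompact.mem_iff.1 hfiber
    refine ⟨q '' K, ?_, image_subset_iff.2 hKn, hKc.image hq.continuous⟩
    rw [← hq.isClosedMap.comap_nhds_eq hq.continuous] at hK
    exact Filter.image_mem_of_mem_comap (by simp [hsurj.range_eq]) hK

theorem IsClosedMap.t2Space_of_surjective [T2Space Z] (hq : IsClosedMap q)
    (hsurj : Function.Surjective q) (hfib : ∀ w, IsCompact (q ⁻¹' {w})) : T2Space W := by
  refine t2Space_iff_disjoint_nhds.2 fun w₁ w₂ hne => ?_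
  change Disjoint (𝓝 w₁) (𝓝 w₂)
  rw [← Filter.disjoint_comap_iff hsurj]
  have hsep := SeparatedNhds.of_isCompact_isCompact (hfib w₁) (hfib w₂)
    ((disjoint_singleton.2 hne).preimage q)
  exact (separatedNhds_iff_disjoint.1 hsep).mono hq.comap_nhds_le hq.comap_nhds_le

end ProperQuotient

namespace AdjSpace

variable {X Y : Type*} {A : Set Y} (f : A → X)

def mk : X ⊕ Y → AdjSpace f := Quot.mk (AdjRel f)

theorem surjective_mk : Function.Surjective (mk f) := Quot.exists_rep

theorem mk_inr_val (a : A) : mk f (.inr a.1) = mk f (.inl (f a)) :=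
  (Quot.sound (AdjRel.glue a)).symm

-- Glued points are exactly those with the same `rep` (`mk_eq_mk_iff`), which spares us describing
-- the equivalence relation generated by `AdjRel f`.
open Classical in
noncomputable def rep : X ⊕ Y → X ⊕ Y :=
  Sum.elim Sum.inl fun y => if h : y ∈ A then .inl (f ⟨y, h⟩) else .inr y

variable {f}

@[simp]
theorem rep_inl (x : X) : rep f (.inl x) = .inl x := rfl

theorem rep_inr_val (a : A) : rep f (.inr a.1) = .inl (f a) := by
  simp [rep]

theorem rep_inr_of_notMem {y : Y} (hy : y ∉ A) : rep f (.inr y) = .inr y := by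
  simp [rep, hy]

theorem rep_eq_inl_iff {z : X ⊕ Y} {x : X} :
    rep f z = .inl x ↔ z = .inl x ∨ ∃ a : A, z = .inr a.1 ∧ f a = x := by
  rcases z with x' | y
  · simp
  · by_cases hy : y ∈ A
    · simp [rep, hy, Subtype.exists]
    · simp [rep, hy]

theorem rep_eq_inr_iff {z : X ⊕ Y} {y : Y} : rep f z = .inr y ↔ z = .inr y ∧ y ∉ A := by
  rcases z with x | y'
  · simp
  · by_cases hy : y' ∈ A <;> simp only [rep, Sum.elim_inr, hy, dite_true, dite_false] <;>
      grind

theorem mk_rep (z : X ⊕ Y) : mk f (rep f z) = mk f z := by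
  rcases z with x | y
  · rfl
  · by_cases hy : y ∈ A
    · lift y to A using hy
      rw [rep_inr_val, mk_inr_val]
    · rw [rep_inr_of_notMem hy]

theorem mk_eq_mk_iff {z z' : X ⊕ Y} : mk f z = mk f z' ↔ rep f z = rep f z' := by
  refine ⟨fun h => congrArg (Quot.lift (rep f) ?_) h, fun h => by rw [← mk_rep, h, mk_rep]⟩
  rintro _ _ ⟨a⟩
  exact (rep_inr_val a).symm

theorem preimage_rep_inl (x : X) :
    rep f ⁻¹' {.inl x} = {.inl x} ∪ .inr '' (Subtype.val '' (f ⁻¹' {x})) := by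
  ext z
  simp only [mem_preimage, mem_singleton_iff, rep_eq_inl_iff, mem_union, mem_image]
  grind

theorem preimage_inl_saturation (C : Set (X ⊕ Y)) :
    .inl ⁻¹' (mk f ⁻¹' (mk f '' C)) = .inl ⁻¹' C ∪ f '' (Subtype.val ⁻¹' (.inr ⁻¹' C)) := by
  ext x
  simp only [mem_preimage, mem_image, mk_eq_mk_iff, rep_inl, rep_eq_inl_iff, mem_union]
  grind

theorem preimage_inr_saturation (C : Set (X ⊕ Y)) :
    .inr ⁻¹' (mk f ⁻¹' (mk f '' C)) =
      .inr ⁻¹' C ∪ Subtype.val '' (f ⁻¹' (.inl ⁻¹' (mk f ⁻¹' (mk f '' C)))) := by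
  refine Subset.antisymm (fun y hy => ?_)
    (union_subset (preimage_mono (subset_preimage_image _ _)) ?_)
  · by_cases hyA : y ∈ A
    · lift y to A using hyA
      refine Or.inr ⟨y, ?_, rfl⟩
      simp only [mem_preimage] at hy ⊢
      rwa [← mk_inr_val]
    · obtain ⟨c, hc, hcy⟩ := hy
      rw [mk_eq_mk_iff, rep_inr_of_notMem hyA, rep_eq_inr_iff] at hcy
      exact Or.inl (show Sum.inr y ∈ C from hcy.1 ▸ hc)
  · rintro _ ⟨a, ha, rfl⟩
    simp only [mem_preimage] at ha ⊢
    rwa [mk_inr_val]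

variable [TopologicalSpace X] [TopologicalSpace Y]

theorem isQuotientMap_mk : IsQuotientMap (mk f) :=
  isQuotientMap_quot_mk

theorem isClosedMap_mk (hA : IsClosed A) (hf : IsProperMap f) : IsClosedMap (mk f) := by
  intro C hC
  rw [← isQuotientMap_mk.isClosed_preimage, isClosed_sum_iff, preimage_inr_saturation,
    preimage_inl_saturation]
  rw [isClosed_sum_iff] at hC
  have hX : IsClosed (.inl ⁻¹' C ∪ f '' (Subtype.val ⁻¹' (.inr ⁻¹' C))) :=
    hC.1.union (hf.isClosedMap _ (hC.2.preimage continuous_subtype_val))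
  exact ⟨hX, hC.2.union
    (hA.isClosedEmbedding_subtypeVal.isClosedMap _ (hX.preimage hf.continuous))⟩

theorem isCompact_preimage_mk_singleton (hf : IsProperMap f) (w : AdjSpace f) :
    IsCompact (mk f ⁻¹' {w}) := by
  obtain ⟨z, rfl⟩ := surjective_mk f w
  have hfiber : mk f ⁻¹' {mk f z} = rep f ⁻¹' {rep f z} := by
    ext
    simp [mk_eq_mk_iff]
  rw [hfiber]
  rcases rep f z with x | y
  · rw [preimage_rep_inl]
    exact isCompact_singleton.union
      (((hf.isCompact_preimage isCompact_singleton).image continuous_subtype_val).image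
        continuous_inr)
  · refine Subsingleton.isCompact fun z₁ h₁ z₂ h₂ => ?_
    exact (rep_eq_inr_iff.1 h₁).1.trans (rep_eq_inr_iff.1 h₂).1.symm

theorem isProperMap_mk (hA : IsClosed A) (hf : IsProperMap f) : IsProperMap (mk f) :=
  isProperMap_iff_isClosedMap_and_compact_fibers.2
    ⟨isQuotientMap_mk.continuous, isClosedMap_mk hA hf, isCompact_preimage_mk_singleton hf⟩

end AdjSpace

/-- Let `X` and `Y` be locally compact Hausdorff topological spaces, let `A` be a closed
subspace of `Y`, and let `f : A → X` be a proper continuous map. Then the adjunction space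
`X ∪_f Y` is a locally compact Hausdorff space. -/
theorem adjSpace_locallyCompact_t2 {X Y : Type*} [TopologicalSpace X] [TopologicalSpace Y]
    [LocallyCompactSpace X] [T2Space X] [LocallyCompactSpace Y] [T2Space Y]
    {A : Set Y} (hA : IsClosed A) (f : A → X) (hf : ProperCont f) :
    LocallyCompactSpace (AdjSpace f) ∧ T2Space (AdjSpace f) := by
  have hfp : IsProperMap f := isProperMap_iff_isCompact_preimage.2 ⟨hf.1, fun K hK => hf.2 K hK⟩
  have hq := AdjSpace.isProperMap_mk hA hfp
  exact ⟨hq.locallyCompactSpace_of_surjective (AdjSpace.surjective_mk f),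
    hq.isClosedMap.t2Space_of_surjective (AdjSpace.surjective_mk f)
      fun _ => hq.isCompact_preimage isCompact_singleton⟩
end

section
/- Let G be a closed subgraph of a topological graph F. Then the following are equivalent: (1) G is a regular closed subgraph of F, i.e., G⁰ is negatively invariant in F⁰ and r_F⁻¹(G⁰) ⊆ G¹; (2) the pair of inclusion maps (G¹ ↪ F¹, G⁰ ↪ F⁰) is a regular factor map from G to F. -/
open Set Topology

/-- The raw data of a (topological) graph: a source and a range map from edges to vertices. -/
structure GraphData (V E : Type*) where
  s : E → V
  r : E → V

/-- `g` is a topological graph: source and range are continuous and the range map is a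
local homeomorphism. -/
structure IsTopGraph {V E : Type*} [TopologicalSpace V] [TopologicalSpace E]
    (g : GraphData V E) : Prop where
  s_cont : Continuous g.s
  r_cont : Continuous g.r
  r_locHomeo : IsLocalHomeomorph g.r

namespace GraphData

variable {V E : Type*} [TopologicalSpace V] [TopologicalSpace E]

/-- `E⁰_fin`: vertices having a neighborhood whose preimage under the source map is compact. -/
def finSet (g : GraphData V E) : Set V := {v | ∃ U ∈ nhds v, IsCompact (g.s ⁻¹' U)}

/-- `E⁰_sink = E⁰ \ closure (s(E¹))`. -/
def sinkSet (g : GraphData V E) : Set V := (closure (Set.range g.s))ᶜ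

/-- `E⁰_reg = E⁰_fin \ closure (E⁰_sink)`. -/
def regSet (g : GraphData V E) : Set V := g.finSet \ closure g.sinkSet

/-- `E⁰_sing = E⁰ \ E⁰_reg`. -/
def singSet (g : GraphData V E) : Set V := (g.regSet)ᶜ

/-- A set of vertices is negatively invariant if every regular vertex in it emits an
edge whose range lies in it. -/
def NegInvariant (g : GraphData V E) (Y : Set V) : Prop :=
  ∀ v ∈ Y ∩ g.regSet, ∃ e, g.s e = v ∧ g.r e ∈ Y

/-- A topological graph is row-finite if `s(E¹) = E⁰_reg`. -/
def RowFinite (g : GraphData V E) : Prop := Set.range g.s = g.regSet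

/-- The restriction of a graph to a pair of subsets of vertices and edges. -/
def restrict (g : GraphData V E) (G0 : Set V) (G1 : Set E)
    (hs : Set.MapsTo g.s G1 G0) (hr : Set.MapsTo g.r G1 G0) : GraphData G0 G1 where
  s := fun e => ⟨g.s e, hs e.2⟩
  r := fun e => ⟨g.r e, hr e.2⟩

end GraphData

/-- `(G0, G1)` determines a closed subgraph of `g` (in particular it is itself
a topological graph with the restricted source and range maps). -/
structure IsClosedSubgraph {V E : Type*} [TopologicalSpace V] [TopologicalSpace E]
    (g : GraphData V E) (G0 : Set V) (G1 : Set E) : Prop where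
  s_maps : Set.MapsTo g.s G1 G0
  r_maps : Set.MapsTo g.r G1 G0
  closed0 : IsClosed G0
  closed1 : IsClosed G1
  isGraph : IsTopGraph (g.restrict G0 G1 s_maps r_maps)

/-- A regular closed subgraph: a closed subgraph whose vertex set is negatively invariant
and such that `r⁻¹(G⁰) ⊆ G¹`. -/
structure IsRegularClosedSubgraph {V E : Type*} [TopologicalSpace V] [TopologicalSpace E]
    (g : GraphData V E) (G0 : Set V) (G1 : Set E) extends IsClosedSubgraph g G0 G1 : Prop where
  negInv : g.NegInvariant G0
  r_pre : g.r ⁻¹' G0 ⊆ G1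

/-- A regular factor map `(m¹, m⁰) : gG → gF` between topological graphs: a pair of proper
continuous maps satisfying (F1), (F2) and (F3). -/
structure IsRegularFactorMap {V1 E1 V2 E2 : Type*}
    [TopologicalSpace V1] [TopologicalSpace E1] [TopologicalSpace V2] [TopologicalSpace E2]
    (gG : GraphData V1 E1) (gF : GraphData V2 E2) (m0 : V1 → V2) (m1 : E1 → E2) : Prop where
  proper0 : ProperCont m0
  proper1 : ProperCont m1
  F1r : ∀ e, gF.r (m1 e) = m0 (gG.r e)
  F1s : ∀ e, gF.s (m1 e) = m0 (gG.s e)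
  F2 : ∀ (x : E2) (v : V1), gF.r x = m0 v → ∃! e : E1, m1 e = x ∧ gG.r e = v
  F3 : m0 '' gG.singSet ⊆ gF.singSet

/-! (F1) and properness are automatic for inclusions of closed sets, and (F2) for inclusions says
exactly `r⁻¹(G⁰) ⊆ G¹`; the content lies in (F3) and negative invariance. A vertex of `G⁰` that is
regular in `F` stays regular in `G`: finiteness passes to the closed set `G¹`, and negative
invariance together with `r⁻¹(G⁰) ⊆ G¹` puts all `F`-regular vertices of `G⁰`, an open subset of
`G⁰`, into `s(G¹)`, hence away from the closure of the sinks of `G`. Conversely, a regular vertex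
of a Hausdorff graph emits an edge: near it, the range of `s` is the image of a compact set. -/

theorem IsClosed.properCont_subtypeVal {X : Type*} [TopologicalSpace X] {C : Set X}
    (hC : IsClosed C) : ProperCont (Subtype.val : C → X) :=
  ⟨continuous_subtype_val, fun _ hK => hC.isClosedEmbedding_subtypeVal.isCompact_preimage hK⟩

namespace GraphData

variable {V E : Type*} [TopologicalSpace V] (g : GraphData V E)

theorem notMem_closure_sinkSet_iff {v : V} :
    v ∉ closure g.sinkSet ↔ v ∈ interior (closure (range g.s)) := by
  rw [sinkSet, closure_compl, notMem_compl_iff]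

variable [TopologicalSpace E]

theorem isOpen_finSet : IsOpen g.finSet :=
  isOpen_iff_eventually.2 fun _ ⟨U, hU, hK⟩ =>
    (eventually_mem_nhds_iff.2 hU).mono fun _ hU' => ⟨U, hU', hK⟩

theorem isOpen_regSet : IsOpen g.regSet :=
  g.isOpen_finSet.sdiff isClosed_closure

theorem mem_range_s_of_mem_regSet [T2Space V] (hs : Continuous g.s) {v : V}
    (hv : v ∈ g.regSet) : v ∈ range g.s := by
  obtain ⟨⟨U, hU, hK⟩, hv_sink⟩ := hv
  have hv_closure : v ∈ closure (range g.s) :=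
    interior_subset (g.notMem_closure_sinkSet_iff.1 hv_sink)
  have hclosed : IsClosed (range g.s ∩ U) :=
    image_preimage_eq_range_inter ▸ (hK.image hs).isClosed
  have hv_closure' : v ∈ closure (range g.s ∩ U) := mem_closure_iff_nhds.2 fun t ht =>
    (mem_closure_iff_nhds.1 hv_closure (t ∩ U) (Filter.inter_mem ht hU)).mono
      fun _ hx => ⟨hx.1.1, hx.2, hx.1.2⟩
  exact (hclosed.closure_eq ▸ hv_closure').1

variable {G0 : Set V} {G1 : Set E} (hs : MapsTo g.s G1 G0) (hr : MapsTo g.r G1 G0)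

theorem mem_finSet_restrict (hG1 : IsClosed G1) {v : G0} (hv : ↑v ∈ g.finSet) :
    v ∈ (g.restrict G0 G1 hs hr).finSet := by
  obtain ⟨U, hU, hK⟩ := hv
  exact ⟨Subtype.val ⁻¹' U, continuous_subtype_val.continuousAt.preimage_mem_nhds hU,
    hG1.isClosedEmbedding_subtypeVal.isCompact_preimage hK⟩

theorem mem_regSet_restrict (hG1 : IsClosed G1) (hneg : g.NegInvariant G0)
    (hpre : g.r ⁻¹' G0 ⊆ G1) {v : G0} (hv : ↑v ∈ g.regSet) :
    v ∈ (g.restrict G0 G1 hs hr).regSet := by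
  refine ⟨g.mem_finSet_restrict hs hr hG1 hv.1, (notMem_closure_sinkSet_iff _).2 ?_⟩
  have hreg_sub : Subtype.val ⁻¹' g.regSet ⊆ range (g.restrict G0 G1 hs hr).s := by
    rintro ⟨w, hw⟩ hw_reg
    obtain ⟨e, rfl, he⟩ := hneg w ⟨hw, hw_reg⟩
    exact ⟨⟨e, hpre he⟩, rfl⟩
  exact interior_maximal (hreg_sub.trans subset_closure)
    (g.isOpen_regSet.preimage continuous_subtype_val) hv

end GraphData

theorem isRegularClosedSubgraph_iff_inclusion_isRegularFactorMap_general
    {V E : Type*} [TopologicalSpace V] [TopologicalSpace E]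
    [T2Space V]
    (gF : GraphData V E) {G0 : Set V} {G1 : Set E}
    (hG : IsClosedSubgraph gF G0 G1) :
    IsRegularClosedSubgraph gF G0 G1 ↔
      IsRegularFactorMap (gF.restrict G0 G1 hG.s_maps hG.r_maps) gF
        (Subtype.val : G0 → V) (Subtype.val : G1 → E) := by
  constructor
  · intro h
    refine ⟨hG.closed0.properCont_subtypeVal, hG.closed1.properCont_subtypeVal,
      fun _ => rfl, fun _ => rfl, ?F2, ?F3⟩
    · intro x v hxv
      have hx : x ∈ G1 := h.r_pre (show gF.r x ∈ G0 from hxv ▸ v.2)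
      exact ⟨⟨x, hx⟩, ⟨rfl, Subtype.ext hxv⟩, fun _ he => Subtype.ext he.1⟩
    · rintro _ ⟨v, hv_sing, rfl⟩ hv_reg
      exact hv_sing (gF.mem_regSet_restrict _ _ hG.closed1 h.negInv h.r_pre hv_reg)
  · intro h
    have hpre : gF.r ⁻¹' G0 ⊆ G1 := fun e he => by
      obtain ⟨e', ⟨rfl, -⟩, -⟩ := h.F2 e ⟨gF.r e, he⟩ rfl
      exact e'.2
    have hreg : ∀ v : G0, ↑v ∈ gF.regSet → v ∈ (gF.restrict G0 G1 hG.s_maps hG.r_maps).regSet :=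
      fun v hv => by_contra fun hv_sing => h.F3 ⟨v, hv_sing, rfl⟩ hv
    refine ⟨hG, fun v ⟨hv, hv_reg⟩ => ?_, hpre⟩
    obtain ⟨e, he⟩ := GraphData.mem_range_s_of_mem_regSet _ hG.isGraph.s_cont (hreg ⟨v, hv⟩ hv_reg)
    exact ⟨e, congrArg Subtype.val he, hG.r_maps e.2⟩

/-- Let `G` be a closed subgraph of a topological graph `F`. Then `G` is a regular closed
subgraph (i.e. `G⁰` is negatively invariant in `F⁰` and `r_F⁻¹(G⁰) ⊆ G¹`) if and only if the
pair of inclusion maps gives a regular factor map `G → F`. -/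
theorem isRegularClosedSubgraph_iff_inclusion_isRegularFactorMap
    {V E : Type*} [TopologicalSpace V] [TopologicalSpace E]
    [LocallyCompactSpace V] [T2Space V] [LocallyCompactSpace E] [T2Space E]
    (gF : GraphData V E) (hF : IsTopGraph gF) {G0 : Set V} {G1 : Set E}
    (hG : IsClosedSubgraph gF G0 G1) :
    IsRegularClosedSubgraph gF G0 G1 ↔
      IsRegularFactorMap (gF.restrict G0 G1 hG.s_maps hG.r_maps) gF
        (Subtype.val : G0 → V) (Subtype.val : G1 → E) :=
  isRegularClosedSubgraph_iff_inclusion_isRegularFactorMap_general gF hG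
end

section
/- Let m : G → E be a regular factor map between topological graphs. Then m(G) := (m¹(G¹), m⁰(G⁰), s_E|_{m¹(G¹)}, r_E|_{m¹(G¹)}) is a regular closed subgraph of E; in particular m⁰(G⁰) and m¹(G¹) are closed, r_E and s_E map m¹(G¹) into m⁰(G⁰), r_E⁻¹(m⁰(G⁰)) ⊆ m¹(G¹), and m⁰(G⁰) is negatively invariant in E⁰. -/
open Set Topology

/-! By (F1) and (F2), `m¹(G¹) = r_E⁻¹(m⁰(G⁰))`, so the image is the full subgraph of `E`
over the vertex set `m⁰(G⁰)`, which is closed because proper maps into locally compact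
Hausdorff spaces are closed; and a local homeomorphism stays one when restricted over the
preimage of any subset. For negative invariance, (F3) lifts a regular vertex of `m⁰(G⁰)` to a
regular vertex of `G`, which emits an edge: it lies in the closure of `s(G¹)` and has a
neighbourhood `U` with `s(s⁻¹(U)) = U ∩ s(G¹)` compact, hence closed. -/

theorem IsLocalHomeomorph.restrictPreimage {X Y : Type*} [TopologicalSpace X]
    [TopologicalSpace Y] {f : X → Y} (hf : IsLocalHomeomorph f) (t : Set Y) :
    IsLocalHomeomorph (t.restrictPreimage f) := by
  have hcont : Continuous (t.restrictPreimage f) := hf.continuous.restrictPreimage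
  rw [isLocalHomeomorph_iff_isOpenEmbedding_restrict] at hf ⊢
  intro x
  obtain ⟨V, hV, hVf⟩ := hf x
  set U : Set (f ⁻¹' t) := (↑) ⁻¹' V
  refine ⟨U, continuous_subtype_val.continuousAt.preimage_mem_nhds hV, ?_⟩
  let j : U → V := fun u => ⟨u.1.1, u.2⟩
  have hj : IsEmbedding j :=
    .of_comp (by fun_prop) continuous_subtype_val
      (IsEmbedding.subtypeVal.comp IsEmbedding.subtypeVal : IsEmbedding fun u : U => u.1.1)
  refine ⟨.of_comp (hcont.comp continuous_subtype_val) continuous_subtype_val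
    (hVf.isEmbedding.comp hj), ?_⟩
  have hrange : range (U.domRestrict (t.restrictPreimage f)) =
      (↑) ⁻¹' range (V.domRestrict f) := by
    ext y
    constructor
    · rintro ⟨u, rfl⟩
      exact ⟨j u, rfl⟩
    · rintro ⟨v, hv⟩
      exact ⟨⟨⟨v, by simpa [← hv] using y.2⟩, v.2⟩, Subtype.ext hv⟩
  rw [hrange]
  exact hVf.isOpen_range.preimage continuous_subtype_val

theorem ProperCont.isClosed_range {X Y : Type*} [TopologicalSpace X] [TopologicalSpace Y]
    [T2Space Y] [LocallyCompactSpace Y] {f : X → Y} (hf : ProperCont f) :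
    IsClosed (range f) :=
  (isProperMap_iff_isCompact_preimage.mpr ⟨hf.1, fun K hK => hf.2 K hK⟩).isClosedMap
    |>.isClosed_range

namespace GraphData

variable {V E : Type*} [TopologicalSpace V] [TopologicalSpace E]

theorem regSet_subset_range_s [T2Space V] (g : GraphData V E) (hs : Continuous g.s) :
    g.regSet ⊆ range g.s := by
  rintro v ⟨⟨U, hU, hUc⟩, hv⟩
  have hv_closure : v ∈ closure (range g.s) := not_not.mp fun h => hv (subset_closure h)
  have hclosed : IsClosed (U ∩ range g.s) := by
    rw [← image_preimage_eq_inter_range]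
    exact (hUc.image hs).isClosed
  have hv_closure' : v ∈ closure (U ∩ range g.s) :=
    closure_mono (inter_subset_inter_left _ interior_subset)
      (isOpen_interior.inter_closure ⟨mem_interior_iff_mem_nhds.mpr hU, hv_closure⟩)
  exact (hclosed.closure_subset hv_closure').2

end GraphData

theorem IsTopGraph.restrict_of_eq_preimage {V E : Type*} [TopologicalSpace V]
    [TopologicalSpace E] {g : GraphData V E} (hg : IsTopGraph g) {G0 : Set V}
    {G1 : Set E} (hG : G1 = g.r ⁻¹' G0) (hs : MapsTo g.s G1 G0)
    (hr : MapsTo g.r G1 G0) : IsTopGraph (g.restrict G0 G1 hs hr) := by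
  subst hG
  exact ⟨(hg.s_cont.comp continuous_subtype_val).subtype_mk _, hg.r_cont.restrictPreimage,
    hg.r_locHomeo.restrictPreimage G0⟩

namespace IsRegularFactorMap

variable {VG EG VE EE : Type*} [TopologicalSpace VG] [TopologicalSpace EG]
  [TopologicalSpace VE] [TopologicalSpace EE] {gG : GraphData VG EG} {gE : GraphData VE EE}
  {m0 : VG → VE} {m1 : EG → EE}

theorem mapsTo_s_range (hm : IsRegularFactorMap gG gE m0 m1) :
    MapsTo gE.s (range m1) (range m0) := by
  rintro _ ⟨e, rfl⟩
  exact ⟨gG.s e, (hm.F1s e).symm⟩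

theorem range_eq_preimage_range (hm : IsRegularFactorMap gG gE m0 m1) :
    range m1 = gE.r ⁻¹' range m0 := by
  refine subset_antisymm ?_ ?_
  · rintro _ ⟨e, rfl⟩
    exact ⟨gG.r e, (hm.F1r e).symm⟩
  · rintro x ⟨v, hv⟩
    obtain ⟨e, ⟨rfl, -⟩, -⟩ := hm.F2 x v hv.symm
    exact mem_range_self e

theorem mapsTo_r_range (hm : IsRegularFactorMap gG gE m0 m1) :
    MapsTo gE.r (range m1) (range m0) :=
  hm.range_eq_preimage_range.subset

theorem negInvariant_range [T2Space VG] (hm : IsRegularFactorMap gG gE m0 m1)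
    (hsG : Continuous gG.s) : gE.NegInvariant (range m0) := by
  rintro _ ⟨⟨w, rfl⟩, hreg⟩
  have hw : w ∈ gG.regSet := not_not.mp fun hw => hm.F3 ⟨w, hw, rfl⟩ hreg
  obtain ⟨e, rfl⟩ := gG.regSet_subset_range_s hsG hw
  exact ⟨m1 e, hm.F1s e, hm.mapsTo_r_range (mem_range_self e)⟩

end IsRegularFactorMap

theorem image_isRegularClosedSubgraph_general
    {VG EG VE EE : Type*} [TopologicalSpace VG] [TopologicalSpace EG]
    [TopologicalSpace VE] [TopologicalSpace EE]
    [T2Space VG]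
    [LocallyCompactSpace VE] [T2Space VE] [LocallyCompactSpace EE] [T2Space EE]
    (gG : GraphData VG EG) (gE : GraphData VE EE)
    (hG : IsTopGraph gG) (hE : IsTopGraph gE)
    (m0 : VG → VE) (m1 : EG → EE) (hm : IsRegularFactorMap gG gE m0 m1) :
    IsRegularClosedSubgraph gE (Set.range m0) (Set.range m1) :=
  { s_maps := hm.mapsTo_s_range
    r_maps := hm.mapsTo_r_range
    closed0 := hm.proper0.isClosed_range
    closed1 := hm.proper1.isClosed_range
    isGraph := hE.restrict_of_eq_preimage hm.range_eq_preimage_range _ _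
    negInv := hm.negInvariant_range hG.s_cont
    r_pre := hm.range_eq_preimage_range.superset }

/-- Let `m : G → E` be a regular factor map between topological graphs. Then the image
`m(G) = (m¹(G¹), m⁰(G⁰))` with the restricted source and range maps is a regular closed
subgraph of `E`; in particular `m⁰(G⁰)` and `m¹(G¹)` are closed, `r_E` and `s_E` map
`m¹(G¹)` into `m⁰(G⁰)`, `r_E⁻¹(m⁰(G⁰)) ⊆ m¹(G¹)`, and `m⁰(G⁰)` is negatively invariant. -/
theorem image_isRegularClosedSubgraph
    {VG EG VE EE : Type*} [TopologicalSpace VG] [TopologicalSpace EG]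
    [TopologicalSpace VE] [TopologicalSpace EE]
    [LocallyCompactSpace VG] [T2Space VG] [LocallyCompactSpace EG] [T2Space EG]
    [LocallyCompactSpace VE] [T2Space VE] [LocallyCompactSpace EE] [T2Space EE]
    (gG : GraphData VG EG) (gE : GraphData VE EE)
    (hG : IsTopGraph gG) (hE : IsTopGraph gE)
    (m0 : VG → VE) (m1 : EG → EE) (hm : IsRegularFactorMap gG gE m0 m1) :
    IsRegularClosedSubgraph gE (Set.range m0) (Set.range m1) :=
  image_isRegularClosedSubgraph_general gG gE hG hE m0 m1 hm
end

section
/- Every regular closed subgraph G of a row-finite topological graph F is row-finite, i.e., s_G(G¹) = G⁰_reg. -/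
open Set Topology

/-! A vertex of `G` that is regular in `F` emits an edge of `F` back into `G⁰` (negative
invariance), and that edge lies in `G¹` because `r⁻¹(G⁰) ⊆ G¹`. Hence `F⁰_reg ∩ G⁰` is an open
subset of `s_G(G¹)`, so it misses `closure G⁰_sink`; it also lies in `G⁰_fin` because `G¹` is
closed. Row-finiteness of `F` gives `s_G(G¹) ⊆ F⁰_reg ∩ G⁰ ⊆ G⁰_reg`. Conversely, in any graph a
regular vertex `v` lies in the closure of `s(E¹)` and has a neighbourhood `U` with `s⁻¹(U)`
compact; then `s(E¹) ∩ U = s(s⁻¹(U))` is compact, hence closed, so `v ∈ s(E¹)`. -/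

namespace GraphData

variable {V E : Type*} [TopologicalSpace V] [TopologicalSpace E]

theorem isOpen_finSet_s4 (g : GraphData V E) : IsOpen g.finSet := by
  rw [isOpen_iff_mem_nhds]
  rintro v ⟨U, hU, hK⟩
  filter_upwards [eventually_eventually_nhds.mpr hU] with w hw using ⟨U, hw, hK⟩

theorem isOpen_regSet_s4 (g : GraphData V E) : IsOpen g.regSet :=
  g.isOpen_finSet_s4.sdiff isClosed_closure

theorem regSet_subset_closure_range_s (g : GraphData V E) :
    g.regSet ⊆ closure (range g.s) := fun _ hv => by
  by_contra h
  exact hv.2 (subset_closure h)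

section Restrict

variable (g : GraphData V E) {G0 : Set V} {G1 : Set E}
  (hs : MapsTo g.s G1 G0) (hr : MapsTo g.r G1 G0)

theorem preimage_val_finSet_subset_finSet_restrict (hG1 : IsClosed G1) :
    Subtype.val ⁻¹' g.finSet ⊆ (g.restrict G0 G1 hs hr).finSet := by
  rintro v ⟨U, hU, hK⟩
  refine ⟨Subtype.val ⁻¹' U, continuous_subtype_val.continuousAt.preimage_mem_nhds hU, ?_⟩
  rw [Subtype.isCompact_iff]
  have himage : Subtype.val '' ((g.restrict G0 G1 hs hr).s ⁻¹' (Subtype.val ⁻¹' U)) =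
      G1 ∩ g.s ⁻¹' U :=
    Subtype.image_preimage_coe G1 (g.s ⁻¹' U)
  rw [himage]
  exact hK.inter_left hG1

theorem preimage_val_regSet_subset_range_restrict_s (hneg : g.NegInvariant G0)
    (hr_pre : g.r ⁻¹' G0 ⊆ G1) :
    Subtype.val ⁻¹' g.regSet ⊆ range (g.restrict G0 G1 hs hr).s := by
  intro v hv
  obtain ⟨e, hse, hre⟩ := hneg v ⟨v.2, hv⟩
  exact ⟨⟨e, hr_pre hre⟩, Subtype.ext hse⟩

theorem preimage_val_regSet_subset_regSet_restrict (hG1 : IsClosed G1)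
    (hneg : g.NegInvariant G0) (hr_pre : g.r ⁻¹' G0 ⊆ G1) :
    Subtype.val ⁻¹' g.regSet ⊆ (g.restrict G0 G1 hs hr).regSet := by
  intro v hv
  refine ⟨g.preimage_val_finSet_subset_finSet_restrict hs hr hG1 (sdiff_subset hv), ?_⟩
  have hopen : IsOpen (Subtype.val ⁻¹' g.regSet : Set G0) :=
    g.isOpen_regSet_s4.preimage continuous_subtype_val
  have hdisj : Disjoint (Subtype.val ⁻¹' g.regSet) (g.restrict G0 G1 hs hr).sinkSet :=
    disjoint_compl_right.mono_left
      ((g.preimage_val_regSet_subset_range_restrict_s hs hr hneg hr_pre).trans subset_closure)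
  exact (hdisj.closure_right hopen).notMem_of_mem_left hv

end Restrict

end GraphData

theorem regularClosedSubgraph_rowFinite_general
    {V E : Type*} [TopologicalSpace V] [TopologicalSpace E]
    [T2Space V]
    (gF : GraphData V E) (hrow : gF.RowFinite)
    {G0 : Set V} {G1 : Set E} (hG : IsRegularClosedSubgraph gF G0 G1) :
    (gF.restrict G0 G1 hG.s_maps hG.r_maps).RowFinite := by
  refine Subset.antisymm ?_ (GraphData.regSet_subset_range_s _ hG.isGraph.s_cont)
  rintro _ ⟨e, rfl⟩
  have he : gF.s e ∈ gF.regSet := hrow ▸ mem_range_self (e : E)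
  exact gF.preimage_val_regSet_subset_regSet_restrict hG.s_maps hG.r_maps hG.closed1
    hG.negInv hG.r_pre he

/-- Every regular closed subgraph `G` of a row-finite topological graph `F` is row-finite,
i.e. `s_G(G¹) = G⁰_reg`. -/
theorem regularClosedSubgraph_rowFinite
    {V E : Type*} [TopologicalSpace V] [TopologicalSpace E]
    [LocallyCompactSpace V] [T2Space V] [LocallyCompactSpace E] [T2Space E]
    (gF : GraphData V E) (hF : IsTopGraph gF) (hrow : gF.RowFinite)
    {G0 : Set V} {G1 : Set E} (hG : IsRegularClosedSubgraph gF G0 G1) :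
    (gF.restrict G0 G1 hG.s_maps hG.r_maps).RowFinite :=
  regularClosedSubgraph_rowFinite_general gF hrow hG
end

section
/- Let m : G → E be a regular factor map between row-finite topological graphs. Then m⁰(G⁰_reg) ⊆ E⁰_reg. -/
open Set Topology

theorem GraphData.image_range_s_subset {V₁ E₁ V₂ E₂ : Type*} {gG : GraphData V₁ E₁}
    {gF : GraphData V₂ E₂} {m0 : V₁ → V₂} {m1 : E₁ → E₂}
    (hs : ∀ e, gF.s (m1 e) = m0 (gG.s e)) :
    m0 '' range gG.s ⊆ range gF.s := by
  rintro _ ⟨_, ⟨e, rfl⟩, rfl⟩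
  exact ⟨m1 e, hs e⟩

theorem regularFactorMap_image_regSet_subset_general
    {VG EG VE EE : Type*} [TopologicalSpace VG] [TopologicalSpace EG]
    [TopologicalSpace VE] [TopologicalSpace EE]
    (gG : GraphData VG EG) (gE : GraphData VE EE)
    (hrowG : gG.RowFinite) (hrowE : gE.RowFinite)
    (m0 : VG → VE) (m1 : EG → EE) (hm : IsRegularFactorMap gG gE m0 m1) :
    m0 '' gG.regSet ⊆ gE.regSet := by
  rw [← hrowG, ← hrowE]
  exact GraphData.image_range_s_subset hm.F1s

/-- Let `m : G → E` be a regular factor map between row-finite topological graphs.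
Then `m⁰(G⁰_reg) ⊆ E⁰_reg`. -/
theorem regularFactorMap_image_regSet_subset
    {VG EG VE EE : Type*} [TopologicalSpace VG] [TopologicalSpace EG]
    [TopologicalSpace VE] [TopologicalSpace EE]
    [LocallyCompactSpace VG] [T2Space VG] [LocallyCompactSpace EG] [T2Space EG]
    [LocallyCompactSpace VE] [T2Space VE] [LocallyCompactSpace EE] [T2Space EE]
    (gG : GraphData VG EG) (gE : GraphData VE EE)
    (hG : IsTopGraph gG) (hE : IsTopGraph gE)
    (hrowG : gG.RowFinite) (hrowE : gE.RowFinite)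
    (m0 : VG → VE) (m1 : EG → EE) (hm : IsRegularFactorMap gG gE m0 m1) :
    m0 '' gG.regSet ⊆ gE.regSet :=
  regularFactorMap_image_regSet_subset_general gG gE hrowG hrowE m0 m1 hm
end

section
/- Let F be a topological graph in which s_F(F¹) is a preopen subset of F⁰, i.e., s_F(F¹) is contained in the interior of its closure. Then (closure(F⁰_sink) \ F⁰_sink) ∩ F⁰_fin = ∅. -/
open Set Topology

/-!
Since `F⁰_sink` is the complement of `closure (s(F¹))`, its closure is the complement of
`interior (closure (s(F¹)))`, so a boundary point of `F⁰_sink` lies in `closure (s(F¹))` but not in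
its interior. If it also lies in `F⁰_fin`, the source map is proper near it, so `s(F¹)` is closed
there and the point lies in `s(F¹)` itself, which preopenness puts in the interior.
-/

theorem mem_range_of_mem_closure_range_of_isCompact_preimage {X Y : Type*} [TopologicalSpace X]
    [TopologicalSpace Y] [T2Space Y] {f : X → Y} (hf : Continuous f) {y : Y} {U : Set Y}
    (hU : U ∈ 𝓝 y) (hcompact : IsCompact (f ⁻¹' U)) (hy : y ∈ closure (range f)) :
    y ∈ range f := by
  have hclosed : IsClosed (U ∩ range f) := by
    rw [← image_preimage_eq_inter_range]
    exact (hcompact.image hf).isClosed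
  have hy' : y ∈ closure (U ∩ range f) := by
    refine mem_closure_iff_nhds.2 fun W hW => ?_
    simpa only [inter_assoc] using mem_closure_iff_nhds.1 hy (W ∩ U) (Filter.inter_mem hW hU)
  exact (hclosed.closure_eq ▸ hy').2

namespace GraphData

theorem finSet_inter_closure_range_subset_range {V E : Type*} [TopologicalSpace V]
    [TopologicalSpace E] [T2Space V] (g : GraphData V E)
    (hs : Continuous g.s) : g.finSet ∩ closure (range g.s) ⊆ range g.s := by
  rintro v ⟨⟨U, hU, hcompact⟩, hv⟩
  exact mem_range_of_mem_closure_range_of_isCompact_preimage hs hU hcompact hv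

theorem closure_sinkSet {V E : Type*} [TopologicalSpace V] (g : GraphData V E) :
    closure g.sinkSet = (interior (closure (range g.s)))ᶜ :=
  closure_compl

end GraphData

theorem preopen_source_image_boundary_empty_general
    {V E : Type*} [TopologicalSpace V] [TopologicalSpace E]
    [T2Space V]
    (gF : GraphData V E) (hF : IsTopGraph gF)
    (hpreopen : Set.range gF.s ⊆ interior (closure (Set.range gF.s))) :
    (closure gF.sinkSet \ gF.sinkSet) ∩ gF.finSet = ∅ := by
  refine eq_empty_of_forall_notMem fun v ⟨⟨hv_closure, hv_not_sink⟩, hv_fin⟩ => ?_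
  rw [gF.closure_sinkSet] at hv_closure
  have hv_source : v ∈ range gF.s :=
    gF.finSet_inter_closure_range_subset_range hF.s_cont ⟨hv_fin, not_not.1 hv_not_sink⟩
  exact hv_closure (hpreopen hv_source)

/-- Let `F` be a topological graph in which `s_F(F¹)` is a preopen subset of `F⁰` (i.e. it
is contained in the interior of its closure). Then
`(closure(F⁰_sink) \ F⁰_sink) ∩ F⁰_fin = ∅`. -/
theorem preopen_source_image_boundary_empty
    {V E : Type*} [TopologicalSpace V] [TopologicalSpace E]
    [LocallyCompactSpace V] [T2Space V] [LocallyCompactSpace E] [T2Space E]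
    (gF : GraphData V E) (hF : IsTopGraph gF)
    (hpreopen : Set.range gF.s ⊆ interior (closure (Set.range gF.s))) :
    (closure gF.sinkSet \ gF.sinkSet) ∩ gF.finSet = ∅ :=
  preopen_source_image_boundary_empty_general gF hF hpreopen
end

section
/- Let E and F be topological graphs with compact vertex and edge spaces, let G be a regular closed subgraph of F, and let m : G → E be a regular factor map. Then there is an isomorphism of topological graphs Σ²E ∪_{Σ²m} Σ²F ≅ Σ²(E ∪_m F), i.e., a pair of homeomorphisms between the vertex spaces and the edge spaces intertwining the source maps and the range maps. -/
open Set Topology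

section Adjunction

/-- The canonical (closed) embedding `X → X ∪_f Y`. -/
def adjInc {X Y : Type*} {A : Set Y} (f : A → X) : X → AdjSpace f :=
  fun x => Quot.mk _ (Sum.inl x)

/-- The canonical map `p : Y → X ∪_f Y`. -/
def adjP {X Y : Type*} {A : Set Y} (f : A → X) : Y → AdjSpace f :=
  fun y => Quot.mk _ (Sum.inr y)

variable {VE EE VF EF : Type*}

/-- The source map `s_∪` of the adjunction graph `E ∪_m F`. -/
def adjS (gE : GraphData VE EE) (gF : GraphData VF EF) {G0 : Set VF} {G1 : Set EF}
    (m0 : G0 → VE) (m1 : G1 → EE) (hs : Set.MapsTo gF.s G1 G0)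
    (hF1s : ∀ e : G1, gE.s (m1 e) = m0 ⟨gF.s e, hs e.2⟩) :
    AdjSpace m1 → AdjSpace m0 :=
  Quot.lift
    (fun x => match x with
      | Sum.inl e => adjInc m0 (gE.s e)
      | Sum.inr e => adjP m0 (gF.s e))
    (by
      rintro _ _ ⟨a⟩
      show adjInc m0 (gE.s (m1 a)) = adjP m0 (gF.s a.1)
      rw [hF1s a]
      exact Quot.sound (AdjRel.glue ⟨gF.s a.1, hs a.2⟩))

/-- The range map `r_∪` of the adjunction graph `E ∪_m F`. -/
def adjR (gE : GraphData VE EE) (gF : GraphData VF EF) {G0 : Set VF} {G1 : Set EF}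
    (m0 : G0 → VE) (m1 : G1 → EE) (hr : Set.MapsTo gF.r G1 G0)
    (hF1r : ∀ e : G1, gE.r (m1 e) = m0 ⟨gF.r e, hr e.2⟩) :
    AdjSpace m1 → AdjSpace m0 :=
  Quot.lift
    (fun x => match x with
      | Sum.inl e => adjInc m0 (gE.r e)
      | Sum.inr e => adjP m0 (gF.r e))
    (by
      rintro _ _ ⟨a⟩
      show adjInc m0 (gE.r (m1 a)) = adjP m0 (gF.r a.1)
      rw [hF1r a]
      exact Quot.sound (AdjRel.glue ⟨gF.r a.1, hr a.2⟩))

/-- The adjunction graph `E ∪_m F`, obtained by attaching the topological graph `F` to the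
topological graph `E` along a closed subgraph `(G0, G1)` of `F` via the pair `(m¹, m⁰)`. -/
def adjGraph (gE : GraphData VE EE) (gF : GraphData VF EF) {G0 : Set VF} {G1 : Set EF}
    (m0 : G0 → VE) (m1 : G1 → EE)
    (hs : Set.MapsTo gF.s G1 G0) (hr : Set.MapsTo gF.r G1 G0)
    (hF1s : ∀ e : G1, gE.s (m1 e) = m0 ⟨gF.s e, hs e.2⟩)
    (hF1r : ∀ e : G1, gE.r (m1 e) = m0 ⟨gF.r e, hr e.2⟩) :
    GraphData (AdjSpace m0) (AdjSpace m1) where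
  s := adjS gE gF m0 m1 hs hF1s
  r := adjR gE gF m0 m1 hr hF1r

end Adjunction

section Suspension

/-- The quantum double suspension graph `Σ²E` of a topological graph `E`: one extra vertex
`w`, one extra loop edge `x` at `w`, and one extra edge from `w` to each old vertex. -/
def susp {V E : Type*} (g : GraphData V E) : GraphData (Unit ⊕ V) (Unit ⊕ V ⊕ E) where
  s := fun x => match x with
    | Sum.inl _ => Sum.inl ()
    | Sum.inr (Sum.inl _) => Sum.inl ()
    | Sum.inr (Sum.inr e) => Sum.inr (g.s e)
  r := fun x => match x with
    | Sum.inl _ => Sum.inl ()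
    | Sum.inr (Sum.inl v) => Sum.inr v
    | Sum.inr (Sum.inr e) => Sum.inr (g.r e)

variable {VE EE VF EF : Type*}

/-- The vertex set of `Σ²G` inside `(Σ²F)⁰`. -/
def suspV0 (G0 : Set VF) : Set (Unit ⊕ VF) := Set.range Sum.inl ∪ Sum.inr '' G0

/-- The edge set of `Σ²G` inside `(Σ²F)¹`. -/
def suspE1 (G0 : Set VF) (G1 : Set EF) : Set (Unit ⊕ VF ⊕ EF) :=
  Set.range Sum.inl ∪ Sum.inr '' (Sum.inl '' G0 ∪ Sum.inr '' G1)

lemma mem_suspV0 {G0 : Set VF} {v : VF} (h : Sum.inr v ∈ suspV0 G0) : v ∈ G0 := by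
  rcases h with ⟨u, hu⟩ | ⟨w, hw, he⟩
  · exact absurd hu (by simp)
  · cases Sum.inr.inj he; exact hw

lemma mem_suspE1_inl {G0 : Set VF} {G1 : Set EF} {v : VF}
    (h : Sum.inr (Sum.inl v) ∈ suspE1 G0 G1) : v ∈ G0 := by
  rcases h with ⟨u, hu⟩ | ⟨w, hw, he⟩
  · exact absurd hu (by simp)
  · cases Sum.inr.inj he
    rcases hw with ⟨a, ha, hav⟩ | ⟨b, hb, hbv⟩
    · cases Sum.inl.inj hav; exact ha
    · exact absurd hbv (by simp)

lemma mem_suspE1_inr {G0 : Set VF} {G1 : Set EF} {e : EF}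
    (h : Sum.inr (Sum.inr e) ∈ suspE1 G0 G1) : e ∈ G1 := by
  rcases h with ⟨u, hu⟩ | ⟨w, hw, he⟩
  · exact absurd hu (by simp)
  · cases Sum.inr.inj he
    rcases hw with ⟨a, ha, hav⟩ | ⟨b, hb, hbv⟩
    · exact absurd hav (by simp)
    · cases Sum.inr.inj hbv; exact hb

/-- The vertex component of the suspension `Σ²m` of a factor map `m`. -/
def suspM0 {G0 : Set VF} (m0 : G0 → VE) : suspV0 G0 → Unit ⊕ VE := fun x =>
  match x with
  | ⟨Sum.inl _, _⟩ => Sum.inl ()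
  | ⟨Sum.inr v, h⟩ => Sum.inr (m0 ⟨v, mem_suspV0 h⟩)

/-- The edge component of the suspension `Σ²m` of a factor map `m`. -/
def suspM1 {G0 : Set VF} {G1 : Set EF} (m0 : G0 → VE) (m1 : G1 → EE) :
    suspE1 G0 G1 → Unit ⊕ VE ⊕ EE := fun x =>
  match x with
  | ⟨Sum.inl _, _⟩ => Sum.inl ()
  | ⟨Sum.inr (Sum.inl v), h⟩ => Sum.inr (Sum.inl (m0 ⟨v, mem_suspE1_inl h⟩))
  | ⟨Sum.inr (Sum.inr e), h⟩ => Sum.inr (Sum.inr (m1 ⟨e, mem_suspE1_inr h⟩))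

lemma susp_s_mapsTo {gF : GraphData VF EF} {G0 : Set VF} {G1 : Set EF}
    (hs : Set.MapsTo gF.s G1 G0) :
    Set.MapsTo (susp gF).s (suspE1 G0 G1) (suspV0 G0) := by
  rintro (u | (v | e)) hx
  · exact Or.inl ⟨(), rfl⟩
  · exact Or.inl ⟨(), rfl⟩
  · exact Or.inr ⟨gF.s e, hs (mem_suspE1_inr hx), rfl⟩

lemma susp_r_mapsTo {gF : GraphData VF EF} {G0 : Set VF} {G1 : Set EF}
    (hr : Set.MapsTo gF.r G1 G0) :
    Set.MapsTo (susp gF).r (suspE1 G0 G1) (suspV0 G0) := by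
  rintro (u | (v | e)) hx
  · exact Or.inl ⟨(), rfl⟩
  · exact Or.inr ⟨v, mem_suspE1_inl hx, rfl⟩
  · exact Or.inr ⟨gF.r e, hr (mem_suspE1_inr hx), rfl⟩

lemma susp_F1s {gE : GraphData VE EE} {gF : GraphData VF EF} {G0 : Set VF} {G1 : Set EF}
    (hs : Set.MapsTo gF.s G1 G0) (m0 : G0 → VE) (m1 : G1 → EE)
    (hF1s : ∀ e : G1, gE.s (m1 e) = m0 ⟨gF.s e, hs e.2⟩) :
    ∀ e : suspE1 G0 G1, (susp gE).s (suspM1 m0 m1 e) =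
      suspM0 m0 ⟨(susp gF).s e, susp_s_mapsTo hs e.2⟩ := by
  rintro ⟨(u | (v | a)), h⟩
  · rfl
  · rfl
  · exact congrArg Sum.inr (hF1s ⟨a, mem_suspE1_inr h⟩)

lemma susp_F1r {gE : GraphData VE EE} {gF : GraphData VF EF} {G0 : Set VF} {G1 : Set EF}
    (hr : Set.MapsTo gF.r G1 G0) (m0 : G0 → VE) (m1 : G1 → EE)
    (hF1r : ∀ e : G1, gE.r (m1 e) = m0 ⟨gF.r e, hr e.2⟩) :
    ∀ e : suspE1 G0 G1, (susp gE).r (suspM1 m0 m1 e) =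
      suspM0 m0 ⟨(susp gF).r e, susp_r_mapsTo hr e.2⟩ := by
  rintro ⟨(u | (v | a)), h⟩
  · rfl
  · rfl
  · exact congrArg Sum.inr (hF1r ⟨a, mem_suspE1_inr h⟩)

end Suspension

/-!
`Σ²` only adds disjoint pieces: the vertex `w`, the loop `x`, and a copy of the vertex space
among the edges. Forming an adjunction space commutes with disjoint unions, and on the pieces
`{w}` and `{x}` the map `Σ²m` is the identity, so gluing there changes nothing. Hence both sides
are the same disjoint union of glued pieces, and source and range agree piece by piece.
-/

def Set.disjSum {Y Y' : Type*} (A : Set Y) (B : Set Y') : Set (Y ⊕ Y') :=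
  {z | Sum.elim (· ∈ A) (· ∈ B) z}

namespace AdjSpace

variable {X Y X' Y' : Type*} [TopologicalSpace X] [TopologicalSpace Y]
  [TopologicalSpace X'] [TopologicalSpace Y']

def congrHomeo {A A' : Set Y} (f : A → X) (f' : A' → X) (hA : A = A')
    (hf : ∀ y (h : y ∈ A), f ⟨y, h⟩ = f' ⟨y, hA ▸ h⟩) : AdjSpace f ≃ₜ AdjSpace f' where
  toFun := Quot.lift (Quot.mk _) (by
    rintro _ _ ⟨⟨y, h⟩⟩
    rw [hf y h]
    exact Quot.sound (AdjRel.glue _))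
  invFun := Quot.lift (Quot.mk _) (by
    rintro _ _ ⟨⟨y, h⟩⟩
    subst hA
    rw [← hf y h]
    exact Quot.sound (AdjRel.glue _))
  left_inv := Quot.ind fun _ => rfl
  right_inv := Quot.ind fun _ => rfl
  continuous_toFun := continuous_quot_lift _ continuous_quot_mk
  continuous_invFun := continuous_quot_lift _ continuous_quot_mk

def homeoOfUniv (f : ↥(univ : Set Y) → X) (hf : Continuous f) : AdjSpace f ≃ₜ X where
  toFun := Quot.lift (Sum.elim id fun y => f ⟨y, mem_univ y⟩) fun _ _ ⟨_⟩ => rfl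
  invFun := adjInc f
  left_inv := by
    refine Quot.ind ?_
    rintro (x | y)
    · rfl
    · exact Quot.sound (AdjRel.glue ⟨y, mem_univ y⟩)
  right_inv _ := rfl
  continuous_toFun :=
    continuous_quot_lift _ (continuous_id.sumElim (hf.comp (continuous_id.subtype_mk _)))
  continuous_invFun := continuous_quot_mk.comp continuous_inl

def sumMapOn {A : Set Y} {B : Set Y'} (f : A → X) (g : B → X') : A.disjSum B → X ⊕ X'
  | ⟨Sum.inl y, h⟩ => Sum.inl (f ⟨y, h⟩)
  | ⟨Sum.inr y, h⟩ => Sum.inr (g ⟨y, h⟩)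

def sumHomeo {A : Set Y} {B : Set Y'} (f : A → X) (g : B → X') :
    AdjSpace (sumMapOn f g) ≃ₜ AdjSpace f ⊕ AdjSpace g where
  toFun := Quot.lift (Sum.elim (Sum.map (adjInc f) (adjInc g)) (Sum.map (adjP f) (adjP g)))
    (by
    rintro _ _ ⟨⟨y | y, h⟩⟩
    · exact congrArg Sum.inl (Quot.sound (AdjRel.glue ⟨y, h⟩))
    · exact congrArg Sum.inr (Quot.sound (AdjRel.glue ⟨y, h⟩)))
  invFun := Sum.elim
    (Quot.lift (Sum.elim (fun x => Quot.mk _ (Sum.inl (Sum.inl x)))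
        (fun y => Quot.mk _ (Sum.inr (Sum.inl y)))) (by
      rintro _ _ ⟨⟨y, h⟩⟩
      exact Quot.sound (AdjRel.glue (f := sumMapOn f g) ⟨Sum.inl y, h⟩)))
    (Quot.lift (Sum.elim (fun x => Quot.mk _ (Sum.inl (Sum.inr x)))
        (fun y => Quot.mk _ (Sum.inr (Sum.inr y)))) (by
      rintro _ _ ⟨⟨y, h⟩⟩
      exact Quot.sound (AdjRel.glue (f := sumMapOn f g) ⟨Sum.inr y, h⟩)))
  left_inv := by
    refine Quot.ind ?_
    rintro ((x | x) | (y | y)) <;> rfl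
  right_inv := by
    rintro (q | q) <;> induction q using Quot.ind with | _ z => rcases z with x | y <;> rfl
  continuous_toFun := continuous_quot_lift _ <|
    ((continuous_quot_mk.comp continuous_inl).sumMap
        (continuous_quot_mk.comp continuous_inl)).sumElim
      ((continuous_quot_mk.comp continuous_inr).sumMap
        (continuous_quot_mk.comp continuous_inr))
  continuous_invFun :=
    (continuous_quot_lift _ ((continuous_quot_mk.comp (continuous_inl.comp continuous_inl)).sumElim
      (continuous_quot_mk.comp (continuous_inr.comp continuous_inl)))).sumElim
    (continuous_quot_lift _ ((continuous_quot_mk.comp (continuous_inl.comp continuous_inr)).sumElim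
      (continuous_quot_mk.comp (continuous_inr.comp continuous_inr))))

end AdjSpace

lemma suspV0_eq_disjSum {VF : Type*} (G0 : Set VF) : suspV0 G0 = univ.disjSum G0 := by
  ext (u | v) <;> simp [suspV0, Set.disjSum]

lemma suspE1_eq_disjSum {VF EF : Type*} (G0 : Set VF) (G1 : Set EF) :
    suspE1 G0 G1 = univ.disjSum (G0.disjSum G1) := by
  ext (u | v | e) <;> simp [suspE1, Set.disjSum]

section SuspensionAdjunction

variable {VE EE VF EF : Type*} [TopologicalSpace VE] [TopologicalSpace EE]
  [TopologicalSpace VF] [TopologicalSpace EF] {G0 : Set VF} {G1 : Set EF}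

/-- The vertex homeomorphism `(Σ²E ∪_{Σ²m} Σ²F)⁰ ≃ₜ (Σ²(E ∪_m F))⁰`. -/
def suspAdjHomeo₀ (m0 : G0 → VE) : AdjSpace (suspM0 m0) ≃ₜ (Unit ⊕ AdjSpace m0) :=
  (AdjSpace.congrHomeo (suspM0 m0) (AdjSpace.sumMapOn (fun _ => ()) m0) (suspV0_eq_disjSum G0)
      (by rintro (u | v) h <;> rfl)).trans <|
    (AdjSpace.sumHomeo _ _).trans <|
      (AdjSpace.homeoOfUniv _ continuous_const).sumCongr (Homeomorph.refl _)

/-- The edge homeomorphism `(Σ²E ∪_{Σ²m} Σ²F)¹ ≃ₜ (Σ²(E ∪_m F))¹`. -/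
def suspAdjHomeo₁ (m0 : G0 → VE) (m1 : G1 → EE) :
    AdjSpace (suspM1 m0 m1) ≃ₜ (Unit ⊕ AdjSpace m0 ⊕ AdjSpace m1) :=
  (AdjSpace.congrHomeo (suspM1 m0 m1)
      (AdjSpace.sumMapOn (fun _ => ()) (AdjSpace.sumMapOn m0 m1)) (suspE1_eq_disjSum G0 G1)
      (by rintro (u | v | e) h <;> rfl)).trans <|
    (AdjSpace.sumHomeo _ _).trans <|
      (AdjSpace.homeoOfUniv _ continuous_const).sumCongr (AdjSpace.sumHomeo m0 m1)

end SuspensionAdjunction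

theorem susp_adjGraph_iso_general
    {VE EE VF EF : Type*} [TopologicalSpace VE] [TopologicalSpace EE]
    [TopologicalSpace VF] [TopologicalSpace EF]
    (gE : GraphData VE EE) (gF : GraphData VF EF)
    {G0 : Set VF} {G1 : Set EF}
    (hGF : IsRegularClosedSubgraph gF G0 G1)
    (m0 : G0 → VE) (m1 : G1 → EE)
    (hF1s : ∀ e : G1, gE.s (m1 e) = m0 ⟨gF.s e, hGF.s_maps e.2⟩)
    (hF1r : ∀ e : G1, gE.r (m1 e) = m0 ⟨gF.r e, hGF.r_maps e.2⟩) :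
    ∃ (c0 : AdjSpace (suspM0 m0) ≃ₜ (Unit ⊕ AdjSpace m0))
      (c1 : AdjSpace (suspM1 m0 m1) ≃ₜ (Unit ⊕ AdjSpace m0 ⊕ AdjSpace m1)),
      (∀ x, c0 ((adjGraph (susp gE) (susp gF) (suspM0 m0) (suspM1 m0 m1)
            (susp_s_mapsTo hGF.s_maps) (susp_r_mapsTo hGF.r_maps)
            (susp_F1s hGF.s_maps m0 m1 hF1s) (susp_F1r hGF.r_maps m0 m1 hF1r)).s x) =
          (susp (adjGraph gE gF m0 m1 hGF.s_maps hGF.r_maps hF1s hF1r)).s (c1 x)) ∧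
      (∀ x, c0 ((adjGraph (susp gE) (susp gF) (suspM0 m0) (suspM1 m0 m1)
            (susp_s_mapsTo hGF.s_maps) (susp_r_mapsTo hGF.r_maps)
            (susp_F1s hGF.s_maps m0 m1 hF1s) (susp_F1r hGF.r_maps m0 m1 hF1r)).r x) =
          (susp (adjGraph gE gF m0 m1 hGF.s_maps hGF.r_maps hF1s hF1r)).r (c1 x)) := by
  refine ⟨suspAdjHomeo₀ m0, suspAdjHomeo₁ m0 m1, ?_, ?_⟩ <;>
  · refine Quot.ind ?_
    rintro ((u | v | e) | (u | v | e)) <;> rfl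

/-- Let `E` and `F` be topological graphs with compact vertex and edge spaces, let `G` be a
regular closed subgraph of `F`, and let `m : G → E` be a regular factor map. Then there is
an isomorphism of topological graphs `Σ²E ∪_{Σ²m} Σ²F ≅ Σ²(E ∪_m F)`: a pair of
homeomorphisms between the vertex spaces and the edge spaces intertwining the source maps
and the range maps. -/
theorem susp_adjGraph_iso
    {VE EE VF EF : Type*} [TopologicalSpace VE] [TopologicalSpace EE]
    [TopologicalSpace VF] [TopologicalSpace EF]
    [CompactSpace VE] [T2Space VE] [CompactSpace EE] [T2Space EE]
    [CompactSpace VF] [T2Space VF] [CompactSpace EF] [T2Space EF]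
    (gE : GraphData VE EE) (gF : GraphData VF EF)
    (hE : IsTopGraph gE) (hF : IsTopGraph gF)
    {G0 : Set VF} {G1 : Set EF}
    (hGF : IsRegularClosedSubgraph gF G0 G1)
    (m0 : G0 → VE) (m1 : G1 → EE)
    (hF1s : ∀ e : G1, gE.s (m1 e) = m0 ⟨gF.s e, hGF.s_maps e.2⟩)
    (hF1r : ∀ e : G1, gE.r (m1 e) = m0 ⟨gF.r e, hGF.r_maps e.2⟩)
    (hm : IsRegularFactorMap (gF.restrict G0 G1 hGF.s_maps hGF.r_maps) gE m0 m1) :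
    ∃ (c0 : AdjSpace (suspM0 m0) ≃ₜ (Unit ⊕ AdjSpace m0))
      (c1 : AdjSpace (suspM1 m0 m1) ≃ₜ (Unit ⊕ AdjSpace m0 ⊕ AdjSpace m1)),
      (∀ x, c0 ((adjGraph (susp gE) (susp gF) (suspM0 m0) (suspM1 m0 m1)
            (susp_s_mapsTo hGF.s_maps) (susp_r_mapsTo hGF.r_maps)
            (susp_F1s hGF.s_maps m0 m1 hF1s) (susp_F1r hGF.r_maps m0 m1 hF1r)).s x) =
          (susp (adjGraph gE gF m0 m1 hGF.s_maps hGF.r_maps hF1s hF1r)).s (c1 x)) ∧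
      (∀ x, c0 ((adjGraph (susp gE) (susp gF) (suspM0 m0) (suspM1 m0 m1)
            (susp_s_mapsTo hGF.s_maps) (susp_r_mapsTo hGF.r_maps)
            (susp_F1s hGF.s_maps m0 m1 hF1s) (susp_F1r hGF.r_maps m0 m1 hF1r)).r x) =
          (susp (adjGraph gE gF m0 m1 hGF.s_maps hGF.r_maps hF1s hF1r)).r (c1 x)) :=
  susp_adjGraph_iso_general gE gF hGF m0 m1 hF1s hF1r
end
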